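/- In LK(T)p, the polarisation-removal rules are admissible: (Pol) if Γ ⊢ [P∪{l}] Δ is derivable with l a P-unpolarised literal, then Γ ⊢ [P] Δ is derivable; and (Pol_a) if Γ ⊢ [P∪{l}] A is derivable (focused) with l P-unpolarised, and either l ∉ Γ or Γ^P together with ¬l is T-inconsistent, then Γ ⊢ [P] A is derivable. -/
import Mathlib


open scoped Classical

/-- Abstract structure of literals: an involutive negation (with `neg l ≠ l`),
substitution of terms for variables (commuting with negation), and free variables. -/
structure LitStr (V Tm Lit : Type) where
  neg : Lit → Lit
  neg_invol : ∀ l, neg (neg l) = l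
  neg_ne : ∀ l, neg l ≠ l
  substL : Lit → V → Tm → Lit
  substL_neg : ∀ l x t, substL (neg l) x t = neg (substL l x t)
  fvL : Lit → Set V

/-- Polarised formulae. -/
inductive PForm (V Lit : Type) where
  | lit (l : Lit)
  | andP (A B : PForm V Lit)
  | orP (A B : PForm V Lit)
  | exi (x : V) (A : PForm V Lit)
  | topP
  | botP
  | andN (A B : PForm V Lit)
  | orN (A B : PForm V Lit)
  | fa (x : V) (A : PForm V Lit)
  | topN
  | botN

namespace PForm

variable {V Tm Lit : Type}

/-- Negation of polarised formulae (De Morgan duality, swapping polarities). -/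
def negF (S : LitStr V Tm Lit) : PForm V Lit → PForm V Lit
  | .lit l => .lit (S.neg l)
  | .andP A B => .orN (negF S A) (negF S B)
  | .orP A B => .andN (negF S A) (negF S B)
  | .exi x A => .fa x (negF S A)
  | .topP => .botN
  | .botP => .topN
  | .andN A B => .orP (negF S A) (negF S B)
  | .orN A B => .andP (negF S A) (negF S B)
  | .fa x A => .exi x (negF S A)
  | .topN => .botP
  | .botN => .topP

/-- (Naive) substitution of a term for a variable in a formula. -/
noncomputable def substF (S : LitStr V Tm Lit) (x : V) (t : Tm) : PForm V Lit → PForm V Lit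
  | .lit l => .lit (S.substL l x t)
  | .andP A B => .andP (substF S x t A) (substF S x t B)
  | .orP A B => .orP (substF S x t A) (substF S x t B)
  | .exi y A => if y = x then .exi y A else .exi y (substF S x t A)
  | .topP => .topP
  | .botP => .botP
  | .andN A B => .andN (substF S x t A) (substF S x t B)
  | .orN A B => .orN (substF S x t A) (substF S x t B)
  | .fa y A => if y = x then .fa y A else .fa y (substF S x t A)
  | .topN => .topN
  | .botN => .botN

/-- Free variables of a formula. -/
def fvF (S : LitStr V Tm Lit) : PForm V Lit → Set V
  | .lit l => S.fvL l
  | .andP A B => fvF S A ∪ fvF S B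
  | .orP A B => fvF S A ∪ fvF S B
  | .exi y A => fvF S A \ {y}
  | .topP => ∅
  | .botP => ∅
  | .andN A B => fvF S A ∪ fvF S B
  | .orN A B => fvF S A ∪ fvF S B
  | .fa y A => fvF S A \ {y}
  | .topN => ∅
  | .botN => ∅

/-- `P`-positive formulae. -/
def IsPos (P : Set Lit) : PForm V Lit → Prop
  | .lit l => l ∈ P
  | .andP _ _ => True
  | .orP _ _ => True
  | .exi _ _ => True
  | .topP => True
  | .botP => True
  | _ => False

/-- `P`-negative formulae. -/
def IsNeg (S : LitStr V Tm Lit) (P : Set Lit) : PForm V Lit → Prop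
  | .lit l => S.neg l ∈ P
  | .andN _ _ => True
  | .orN _ _ => True
  | .fa _ _ => True
  | .topN => True
  | .botN => True
  | _ => False

/-- The formula is a literal. -/
def isLit : PForm V Lit → Prop := fun A => ∃ l, A = lit l

end PForm

variable {V Tm Lit : Type}

/-- Syntactical consistency of a set of literals. -/
def SynCons (S : LitStr V Tm Lit) (P : Set Lit) : Prop := ¬ ∃ l, l ∈ P ∧ S.neg l ∈ P

/-- `l` is `P`-unpolarised. -/
def UnpolLit (S : LitStr V Tm Lit) (P : Set Lit) (l : Lit) : Prop := l ∉ P ∧ S.neg l ∉ P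

/-- `P⟨A⟩`: extend the polarisation set `P` with `A` when `A` is a `P`-unpolarised literal. -/
def polar (S : LitStr V Tm Lit) (P : Set Lit) (A : PForm V Lit) : Set Lit :=
  P ∪ {m | A = PForm.lit m ∧ UnpolLit S P m}

/-- `Γ^P`: the `P`-positive literals occurring in `Γ` (as a set). -/
def posLits (P : Set Lit) (Γ : Multiset (PForm V Lit)) : Set Lit :=
  {l | l ∈ P ∧ PForm.lit l ∈ Γ}

/-- The literals occurring in `Γ` (as a set). -/
def litSet (Γ : Multiset (PForm V Lit)) : Set Lit := {l | PForm.lit l ∈ Γ}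

/-- Negation of a multiset of formulae. -/
def negM (S : LitStr V Tm Lit) (Δ : Multiset (PForm V Lit)) : Multiset (PForm V Lit) :=
  Δ.map (PForm.negF S)

/-- Free variables of a multiset of formulae. -/
def fvM (S : LitStr V Tm Lit) (Γ : Multiset (PForm V Lit)) : Set V :=
  {x | ∃ A ∈ Γ, x ∈ PForm.fvF S A}

/-- Free variables of a polarisation set. -/
def fvPol (S : LitStr V Tm Lit) (P : Set Lit) : Set V := {x | ∃ l ∈ P, x ∈ S.fvL l}

/-- An inconsistency predicate: basic inconsistency, upward closure (weakening),
cut-admissibility, and stability under instantiation. -/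
structure InconsPred (S : LitStr V Tm Lit) (T : Set Lit → Prop) : Prop where
  basic : ∀ l : Lit, T {l, S.neg l}
  mono : ∀ ⦃A B : Set Lit⦄, A ⊆ B → T A → T B
  cut : ∀ (A : Set Lit) (l : Lit), T (insert l A) → T (insert (S.neg l) A) → T A
  inst : ∀ (A : Set Lit) (x : V) (t : Tm), T A → T ((fun l => S.substL l x t) '' A)

/-- Syntactical inconsistency: the set contains some literal together with its negation. -/
def SynIncons (S : LitStr V Tm Lit) (A : Set Lit) : Prop := ∃ l, l ∈ A ∧ S.neg l ∈ A

mutual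
  /-- Focused sequents `Γ ⊢ [P] A` of LK(T)p, with a height index. -/
  inductive DerPos (S : LitStr V Tm Lit) (T : Set Lit → Prop) :
      Multiset (PForm V Lit) → Set Lit → PForm V Lit → ℕ → Prop where
    | andP {Γ P A B n m} : DerPos S T Γ P A n → DerPos S T Γ P B m →
        DerPos S T Γ P (.andP A B) (max n m + 1)
    | orP₁ {Γ P A B n} : DerPos S T Γ P A n → DerPos S T Γ P (.orP A B) (n + 1)
    | orP₂ {Γ P A B n} : DerPos S T Γ P B n → DerPos S T Γ P (.orP A B) (n + 1)
    | exi {Γ P x t A n} : DerPos S T Γ P (PForm.substF S x t A) n →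
        DerPos S T Γ P (.exi x A) (n + 1)
    | topP {Γ P} : DerPos S T Γ P .topP 0
    | init1 {Γ P l} : l ∈ P → T (posLits P Γ ∪ {S.neg l}) → DerPos S T Γ P (.lit l) 0
    | release {Γ P N n} : ¬ PForm.IsPos P N → DerNeg S T Γ P {N} n →
        DerPos S T Γ P N (n + 1)

  /-- Unfocused sequents `Γ ⊢ [P] Δ` of LK(T)p, with a height index. -/
  inductive DerNeg (S : LitStr V Tm Lit) (T : Set Lit → Prop) :
      Multiset (PForm V Lit) → Set Lit → Multiset (PForm V Lit) → ℕ → Prop where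
    | andN {Γ P A B Δ n m} : DerNeg S T Γ P (A ::ₘ Δ) n → DerNeg S T Γ P (B ::ₘ Δ) m →
        DerNeg S T Γ P (.andN A B ::ₘ Δ) (max n m + 1)
    | orN {Γ P A B Δ n} : DerNeg S T Γ P (A ::ₘ B ::ₘ Δ) n →
        DerNeg S T Γ P (.orN A B ::ₘ Δ) (n + 1)
    | fa {Γ P x A Δ n} : x ∉ fvM S Γ ∪ fvM S Δ ∪ fvPol S P →
        DerNeg S T Γ P (A ::ₘ Δ) n → DerNeg S T Γ P (.fa x A ::ₘ Δ) (n + 1)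
    | botN {Γ P Δ n} : DerNeg S T Γ P Δ n → DerNeg S T Γ P (.botN ::ₘ Δ) (n + 1)
    | topN {Γ P Δ} : DerNeg S T Γ P (.topN ::ₘ Δ) 0
    | store {Γ P A Δ n} : (PForm.isLit A ∨ PForm.IsPos P A) →
        DerNeg S T (PForm.negF S A ::ₘ Γ) (polar S P (PForm.negF S A)) Δ n →
        DerNeg S T Γ P (A ::ₘ Δ) (n + 1)
    | select {Γ P A n} : ¬ PForm.IsNeg S P A → PForm.negF S A ∈ Γ →
        DerPos S T Γ P A n → DerNeg S T Γ P 0 (n + 1)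
    | init2 {Γ P} : T (posLits P Γ) → DerNeg S T Γ P 0 0
end

/-- Derivability of a focused sequent in LK(T)p. -/
def DerPosD (S : LitStr V Tm Lit) (T : Set Lit → Prop)
    (Γ : Multiset (PForm V Lit)) (P : Set Lit) (A : PForm V Lit) : Prop :=
  ∃ n, DerPos S T Γ P A n

/-- Derivability of an unfocused sequent in LK(T)p. -/
def DerNegD (S : LitStr V Tm Lit) (T : Set Lit → Prop)
    (Γ : Multiset (PForm V Lit)) (P : Set Lit) (Δ : Multiset (PForm V Lit)) : Prop :=
  ∃ n, DerNeg S T Γ P Δ n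

/-- Closure of a set of literals under all substitutions. -/
inductive ClSubst (S : LitStr V Tm Lit) (A : Set Lit) : Lit → Prop
  | base {l} : l ∈ A → ClSubst S A l
  | step {l} (x : V) (t : Tm) : ClSubst S A l → ClSubst S A (S.substL l x t)

/-- Safety of a pair `(Γ, P)`. -/
def Safe (S : LitStr V Tm Lit) (T : Set Lit → Prop)
    (Γ : Multiset (PForm V Lit)) (P : Set Lit) : Prop :=
  ∀ Γ' : Multiset (PForm V Lit), Γ ≤ Γ' →
    ∀ R : Set Lit, ¬ T R →
      posLits P Γ' ⊆ R →
      R ⊆ posLits P Γ' ∪ {l | ClSubst S {m | UnpolLit S P m} l} →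
      ∀ l ∈ P, T (R ∪ {S.neg l}) → T (posLits P Γ' ∪ {S.neg l})

/-- Free variables of an optional focus. -/
def fvO (S : LitStr V Tm Lit) : Option (PForm V Lit) → Set V
  | none => ∅
  | some A => PForm.fvF S A

/-- Sequents `Γ ⊢ [P] X ; Δ` of the relaxed system LK(T)ex. -/
inductive DerEx (S : LitStr V Tm Lit) (T : Set Lit → Prop) :
    Multiset (PForm V Lit) → Set Lit → Option (PForm V Lit) → Multiset (PForm V Lit) → Prop where
  | andP {Γ P A B Δ} : DerEx S T Γ P (some A) Δ → DerEx S T Γ P (some B) Δ →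
      DerEx S T Γ P (some (.andP A B)) Δ
  | orP₁ {Γ P A B Δ} : DerEx S T Γ P (some A) Δ → DerEx S T Γ P (some (.orP A B)) Δ
  | orP₂ {Γ P A B Δ} : DerEx S T Γ P (some B) Δ → DerEx S T Γ P (some (.orP A B)) Δ
  | exi {Γ P x t A Δ} : DerEx S T Γ P (some (PForm.substF S x t A)) Δ →
      DerEx S T Γ P (some (.exi x A)) Δ
  | topP {Γ P Δ} : DerEx S T Γ P (some .topP) Δ
  | init1 {Γ P l Δ} : l ∈ P → T (posLits P Γ ∪ {S.neg l} ∪ litSet (negM S Δ)) →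
      DerEx S T Γ P (some (.lit l)) Δ
  | release {Γ P N} : ¬ PForm.IsPos P N → DerEx S T Γ P none {N} →
      DerEx S T Γ P (some N) 0
  | andN {Γ P X A B Δ} : DerEx S T Γ P X (A ::ₘ Δ) → DerEx S T Γ P X (B ::ₘ Δ) →
      DerEx S T Γ P X (.andN A B ::ₘ Δ)
  | orN {Γ P X A B Δ} : DerEx S T Γ P X (A ::ₘ B ::ₘ Δ) →
      DerEx S T Γ P X (.orN A B ::ₘ Δ)
  | fa {Γ P X x A Δ} : x ∉ fvM S Γ ∪ fvM S Δ ∪ fvPol S P ∪ fvO S X →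
      DerEx S T Γ P X (A ::ₘ Δ) → DerEx S T Γ P X (.fa x A ::ₘ Δ)
  | botN {Γ P X Δ} : DerEx S T Γ P X Δ → DerEx S T Γ P X (.botN ::ₘ Δ)
  | topN {Γ P X Δ} : DerEx S T Γ P X (.topN ::ₘ Δ)
  | store {Γ P X A Δ} : (PForm.isLit A ∨ PForm.IsPos P A) →
      DerEx S T (PForm.negF S A ::ₘ Γ) (polar S P (PForm.negF S A)) X Δ →
      DerEx S T Γ P X (A ::ₘ Δ)
  | select {Γ P A Δ} : ¬ PForm.IsNeg S P A → PForm.negF S A ∈ Γ →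
      DerEx S T Γ P (some A) Δ → DerEx S T Γ P none Δ
  | init2 {Γ P Δ} : T (posLits P Γ ∪ litSet (negM S Δ)) → DerEx S T Γ P none Δ

namespace PolProofAux

variable {V Tm Lit : Type}

lemma neg_inj (S : LitStr V Tm Lit) {a b : Lit} (h : S.neg a = S.neg b) : a = b := by
  have := congrArg S.neg h
  simpa [S.neg_invol] using this

lemma mem_posLits {P : Set Lit} {Γ : Multiset (PForm V Lit)} {x : Lit} :
    x ∈ posLits P Γ ↔ x ∈ P ∧ PForm.lit x ∈ Γ := Iff.rfl

lemma posLits_mono {P P' : Set Lit} {Γ Γ' : Multiset (PForm V Lit)}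
    (hP : P ⊆ P') (hΓ : ∀ A : PForm V Lit, A ∈ Γ → A ∈ Γ') :
    posLits P Γ ⊆ posLits P' Γ' := fun _ hx => ⟨hP hx.1, hΓ _ hx.2⟩

lemma posLits_cons_of_mem {P : Set Lit} {Γ : Multiset (PForm V Lit)} {C : PForm V Lit}
    (hC : C ∈ Γ) : posLits P (C ::ₘ Γ) = posLits P Γ := by
  ext x
  simp only [mem_posLits, Multiset.mem_cons]
  constructor
  · rintro ⟨h1, (rfl | h2)⟩
    exacts [⟨h1, hC⟩, ⟨h1, h2⟩]
  · rintro ⟨h1, h2⟩; exact ⟨h1, Or.inr h2⟩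

lemma posLits_insert_of_not_mem {P : Set Lit} {Γ : Multiset (PForm V Lit)} {l : Lit}
    (h : (PForm.lit l : PForm V Lit) ∉ Γ) : posLits (insert l P) Γ = posLits P Γ := by
  ext x
  simp only [mem_posLits, Set.mem_insert_iff]
  constructor
  · rintro ⟨(rfl | h1), h2⟩
    · exact absurd h2 h
    · exact ⟨h1, h2⟩
  · rintro ⟨h1, h2⟩; exact ⟨Or.inr h1, h2⟩

lemma posLits_insert_subset {P : Set Lit} {Γ : Multiset (PForm V Lit)} {l : Lit} :
    posLits (insert l P) Γ ⊆ insert l (posLits P Γ) := by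
  rintro x ⟨h1, h2⟩
  rcases h1 with rfl | h1
  · exact Set.mem_insert _ _
  · exact Set.mem_insert_of_mem _ ⟨h1, h2⟩

lemma fvM_cons_of_mem {S : LitStr V Tm Lit} {Γ : Multiset (PForm V Lit)} {C : PForm V Lit}
    (hC : C ∈ Γ) : fvM S (C ::ₘ Γ) = fvM S Γ := by
  ext x
  simp only [fvM, Set.mem_setOf_eq, Multiset.mem_cons]
  constructor
  · rintro ⟨A, (rfl | hA), hx⟩
    exacts [⟨A, hC, hx⟩, ⟨A, hA, hx⟩]
  · rintro ⟨A, hA, hx⟩; exact ⟨A, Or.inr hA, hx⟩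

lemma fvPol_mono {S : LitStr V Tm Lit} {P P' : Set Lit} (h : P ⊆ P') :
    fvPol S P ⊆ fvPol S P' := by
  rintro x ⟨m, hm, hx⟩; exact ⟨m, h hm, hx⟩

lemma fvPol_insert_subset {S : LitStr V Tm Lit} {P : Set Lit} {m : Lit} :
    fvPol S (insert m P) ⊆ S.fvL m ∪ fvPol S P := by
  rintro x ⟨a, ha, hx⟩
  rcases ha with rfl | ha
  · exact Or.inl hx
  · exact Or.inr ⟨a, ha, hx⟩

lemma fvL_subset_fvM {S : LitStr V Tm Lit} {Γ : Multiset (PForm V Lit)} {m : Lit}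
    (h : PForm.lit m ∈ Γ) : S.fvL m ⊆ fvM S Γ :=
  fun x hx => ⟨PForm.lit m, h, hx⟩

lemma unpol_neg {S : LitStr V Tm Lit} {P : Set Lit} {l : Lit} (hl : UnpolLit S P l) :
    UnpolLit S P (S.neg l) := ⟨hl.2, by rw [S.neg_invol]; exact hl.1⟩

lemma not_unpol_of_mem {S : LitStr V Tm Lit} {P : Set Lit} {m : Lit} (h : m ∈ P) :
    ¬ UnpolLit S P m := fun hu => hu.1 h

lemma not_unpol_of_neg_mem {S : LitStr V Tm Lit} {P : Set Lit} {m : Lit} (h : S.neg m ∈ P) :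
    ¬ UnpolLit S P m := fun hu => hu.2 h

lemma polar_lit_of_unpol {S : LitStr V Tm Lit} {P : Set Lit} {m : Lit}
    (h : UnpolLit S P m) : polar S P (PForm.lit m : PForm V Lit) = insert m P := by
  ext x
  simp only [polar, Set.mem_union, Set.mem_setOf_eq, PForm.lit.injEq, Set.mem_insert_iff]
  constructor
  · rintro (hx | ⟨rfl, _⟩)
    · exact Or.inr hx
    · exact Or.inl rfl
  · rintro (rfl | hx)
    · exact Or.inr ⟨rfl, h⟩
    · exact Or.inl hx

lemma polar_lit_of_pol {S : LitStr V Tm Lit} {P : Set Lit} {m : Lit}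
    (h : ¬ UnpolLit S P m) : polar S P (PForm.lit m : PForm V Lit) = P := by
  ext x
  simp only [polar, Set.mem_union, Set.mem_setOf_eq, PForm.lit.injEq]
  constructor
  · rintro (hx | ⟨rfl, hu⟩)
    · exact hx
    · exact absurd hu h
  · exact Or.inl

lemma polar_of_nonlit {S : LitStr V Tm Lit} {P : Set Lit} {A : PForm V Lit}
    (h : ∀ m, A ≠ PForm.lit m) : polar S P A = P := by
  ext x
  simp only [polar, Set.mem_union, Set.mem_setOf_eq]
  constructor
  · rintro (hx | ⟨he, _⟩)
    · exact hx
    · exact absurd he (h x)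
  · exact Or.inl

lemma negF_nonlit {S : LitStr V Tm Lit} {A : PForm V Lit}
    (h : ∀ m, A ≠ PForm.lit m) : ∀ m, PForm.negF S A ≠ PForm.lit m := by
  cases A <;> first
    | exact fun m => absurd rfl (h _)
    | simp [PForm.negF]

lemma isPos_mono {P P' : Set Lit} {A : PForm V Lit} (h : P ⊆ P') :
    PForm.IsPos P A → PForm.IsPos P' A := by
  cases A <;> simp only [PForm.IsPos] <;> first
    | exact fun hx => h hx
    | exact id

lemma isNeg_mono {S : LitStr V Tm Lit} {P P' : Set Lit} {A : PForm V Lit} (h : P ⊆ P') :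
    PForm.IsNeg S P A → PForm.IsNeg S P' A := by
  cases A <;> simp only [PForm.IsNeg] <;> first
    | exact fun hx => h hx
    | exact id

lemma isPos_nonlit_iff {P P' : Set Lit} {A : PForm V Lit} (h : ∀ m, A ≠ PForm.lit m) :
    PForm.IsPos P A ↔ PForm.IsPos P' A := by
  cases A <;> simp only [PForm.IsPos]
  exact absurd rfl (h _)

lemma isNeg_nonlit_iff {S : LitStr V Tm Lit} {P P' : Set Lit} {A : PForm V Lit}
    (h : ∀ m, A ≠ PForm.lit m) :
    PForm.IsNeg S P A ↔ PForm.IsNeg S P' A := by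
  cases A <;> simp only [PForm.IsNeg]
  exact absurd rfl (h _)

/-- Duplicate weakening: adding a copy of a formula already in the context
preserves derivability, with the same height. -/
lemma dup_all (S : LitStr V Tm Lit) (T : Set Lit → Prop) : ∀ n : ℕ,
    (∀ (Γ : Multiset (PForm V Lit)) (P : Set Lit) (Δ : Multiset (PForm V Lit))
        (C : PForm V Lit), C ∈ Γ → DerNeg S T Γ P Δ n → DerNeg S T (C ::ₘ Γ) P Δ n) ∧
    (∀ (Γ : Multiset (PForm V Lit)) (P : Set Lit) (A : PForm V Lit)
        (C : PForm V Lit), C ∈ Γ → DerPos S T Γ P A n → DerPos S T (C ::ₘ Γ) P A n) := by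
  intro n
  induction n using Nat.strong_induction_on with
  | _ n IH =>
    constructor
    · intro Γ P Δ C hC hd
      cases hd with
      | andN h1 h2 =>
          exact .andN ((IH _ (Nat.lt_succ_of_le (le_max_left _ _))).1 _ _ _ _ hC h1)
            ((IH _ (Nat.lt_succ_of_le (le_max_right _ _))).1 _ _ _ _ hC h2)
      | orN h => exact .orN ((IH _ (Nat.lt_succ_self _)).1 _ _ _ _ hC h)
      | fa hx h =>
          refine .fa ?_ ((IH _ (Nat.lt_succ_self _)).1 _ _ _ _ hC h)
          rwa [fvM_cons_of_mem hC]
      | botN h => exact .botN ((IH _ (Nat.lt_succ_self _)).1 _ _ _ _ hC h)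
      | topN => exact .topN
      | store hA h =>
          refine .store hA ?_
          have := (IH _ (Nat.lt_succ_self _)).1 _ _ _ C
            (Multiset.mem_cons_of_mem hC) h
          rwa [Multiset.cons_swap] at this
      | select hA hmem h =>
          exact .select hA (Multiset.mem_cons_of_mem hmem)
            ((IH _ (Nat.lt_succ_self _)).2 _ _ _ _ hC h)
      | init2 h =>
          exact .init2 (by rwa [posLits_cons_of_mem hC])
    · intro Γ P A C hC hd
      cases hd with
      | andP h1 h2 =>
          exact .andP ((IH _ (Nat.lt_succ_of_le (le_max_left _ _))).2 _ _ _ _ hC h1)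
            ((IH _ (Nat.lt_succ_of_le (le_max_right _ _))).2 _ _ _ _ hC h2)
      | orP₁ h => exact .orP₁ ((IH _ (Nat.lt_succ_self _)).2 _ _ _ _ hC h)
      | orP₂ h => exact .orP₂ ((IH _ (Nat.lt_succ_self _)).2 _ _ _ _ hC h)
      | exi h => exact .exi ((IH _ (Nat.lt_succ_self _)).2 _ _ _ _ hC h)
      | topP => exact .topP
      | init1 hm h =>
          exact .init1 hm (by rwa [posLits_cons_of_mem hC])
      | release hN h =>
          exact .release hN ((IH _ (Nat.lt_succ_self _)).1 _ _ _ _ hC h)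

/-- In the system polarised with `¬l`, the literal `¬l` is provable under focus
as soon as `¬l` occurs in the context. -/
lemma posNl (S : LitStr V Tm Lit) (T : Set Lit → Prop) (hT : InconsPred S T)
    {Γ : Multiset (PForm V Lit)} {P : Set Lit} {l : Lit}
    (hnlG : PForm.lit (S.neg l) ∈ Γ) :
    DerPos S T Γ (insert (S.neg l) P) (PForm.lit (S.neg l)) 0 := by
  refine .init1 (Set.mem_insert _ _) (hT.mono ?_ (hT.basic (S.neg l)))
  intro x hx
  rcases Set.mem_insert_iff.mp hx with rfl | hx
  · exact Set.mem_union_left _ ⟨Set.mem_insert _ _, hnlG⟩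
  · exact Set.mem_union_right _ hx

lemma trickFlip (S : LitStr V Tm Lit) (T : Set Lit → Prop) (hT : InconsPred S T)
    {Γ : Multiset (PForm V Lit)} {P : Set Lit} {l : Lit} (hl : UnpolLit S P l)
    (hnlG : PForm.lit (S.neg l) ∈ Γ) (hlG : PForm.lit l ∈ Γ) :
    DerNegD S T Γ (insert (S.neg l) P) 0 := by
  refine ⟨1, .select (A := PForm.lit (S.neg l)) ?_ ?_ (posNl S T hT hnlG)⟩
  · simp only [PForm.IsNeg, S.neg_invol]
    intro hmem
    rcases Set.mem_insert_iff.mp hmem with he | hmem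
    · exact (S.neg_ne l) he.symm
    · exact hl.1 hmem
  · show PForm.negF S (PForm.lit (S.neg l)) ∈ Γ
    have e : (PForm.negF S (PForm.lit (S.neg l)) : PForm V Lit) = PForm.lit l := by
      simp [PForm.negF, S.neg_invol]
    rw [e]; exact hlG

lemma trickRem (S : LitStr V Tm Lit) (T : Set Lit → Prop)
    {Γ : Multiset (PForm V Lit)} {P : Set Lit} {l : Lit}
    (hl : UnpolLit S P l) (hlG : PForm.lit l ∈ Γ) {k : ℕ}
    (d : DerNeg S T (PForm.lit l ::ₘ Γ) (insert l P) 0 k) : DerNegD S T Γ P 0 := by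
  have e : (PForm.negF S (PForm.lit (S.neg l)) : PForm V Lit) = PForm.lit l := by
    simp [PForm.negF, S.neg_invol]
  have d1 : DerNeg S T (PForm.negF S (PForm.lit (S.neg l)) ::ₘ Γ)
      (polar S P (PForm.negF S (PForm.lit (S.neg l)))) 0 k := by
    rw [e, polar_lit_of_unpol hl]
    exact d
  have d2 : DerNeg S T Γ P (PForm.lit (S.neg l) ::ₘ 0) (k + 1) :=
    .store (Or.inl ⟨_, rfl⟩) d1
  have d3 : DerPos S T Γ P (PForm.lit (S.neg l)) (k + 2) := by
    refine .release ?_ (by simpa using d2)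
    simp only [PForm.IsPos]
    exact hl.2
  refine ⟨k + 3, .select ?_ ?_ d3⟩
  · simp only [PForm.IsNeg, S.neg_invol]
    exact hl.1
  · rw [e]; exact hlG

lemma buildPosL (S : LitStr V Tm Lit) (T : Set Lit → Prop) (hT : InconsPred S T)
    {Γ : Multiset (PForm V Lit)} {P : Set Lit} {l : Lit} (hl : UnpolLit S P l)
    (hts : T (posLits P Γ ∪ {S.neg l})) : DerPosD S T Γ P (PForm.lit l) := by
  have d0 : DerNeg S T (PForm.lit (S.neg l) ::ₘ Γ) (insert (S.neg l) P) 0 0 := by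
    refine .init2 (hT.mono ?_ hts)
    intro x hx
    rcases (Set.mem_union _ _ _).mp hx with hx | hx
    · exact ⟨Set.mem_insert_of_mem _ hx.1, Multiset.mem_cons_of_mem hx.2⟩
    · rcases Set.mem_singleton_iff.mp hx with rfl
      exact ⟨Set.mem_insert _ _, Multiset.mem_cons_self _ _⟩
  have d1 : DerNeg S T Γ P (PForm.lit l ::ₘ 0) 1 := by
    refine .store (Or.inl ⟨_, rfl⟩) ?_
    have e : (PForm.negF S (PForm.lit l) : PForm V Lit) = PForm.lit (S.neg l) := rfl
    rw [e, polar_lit_of_unpol (unpol_neg hl)]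
    exact d0
  refine ⟨2, .release ?_ (by simpa using d1)⟩
  simp only [PForm.IsPos]
  exact hl.1

lemma buildPosL' (S : LitStr V Tm Lit) (T : Set Lit → Prop) (hT : InconsPred S T)
    {Γ : Multiset (PForm V Lit)} {P : Set Lit} {l : Lit} (hl : UnpolLit S P l)
    (hts : T (posLits (insert (S.neg l) P) (PForm.lit (S.neg l) ::ₘ Γ))) :
    DerPosD S T Γ (insert (S.neg l) P) (PForm.lit l) := by
  have d0 : DerNeg S T (PForm.lit (S.neg l) ::ₘ Γ) (insert (S.neg l) P) 0 0 := .init2 hts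
  have d1 : DerNeg S T Γ (insert (S.neg l) P) (PForm.lit l ::ₘ 0) 1 := by
    refine .store (Or.inl ⟨_, rfl⟩) ?_
    have e : (PForm.negF S (PForm.lit l) : PForm V Lit) = PForm.lit (S.neg l) := rfl
    rw [e, polar_lit_of_pol (not_unpol_of_mem (Set.mem_insert _ _))]
    exact d0
  refine ⟨2, .release ?_ (by simpa using d1)⟩
  simp only [PForm.IsPos]
  intro hmem
  rcases Set.mem_insert_iff.mp hmem with he | hmem
  · exact (S.neg_ne l) he.symm
  · exact hl.1 hmem

/-- Main lemma: simultaneous admissibility of polarisation removal (unfocused and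
focused) and of polarisation flipping (replacing `l` by `¬l` in the polarisation
set, when `¬l` occurs in the context), by strong induction on the height. -/
lemma pol_main (S : LitStr V Tm Lit) (T : Set Lit → Prop) (hT : InconsPred S T) :
    ∀ n : ℕ,
    (∀ (Γ : Multiset (PForm V Lit)) (P : Set Lit) (Δ : Multiset (PForm V Lit)) (l : Lit),
        UnpolLit S P l → DerNeg S T Γ (insert l P) Δ n → DerNegD S T Γ P Δ) ∧
    (∀ (Γ : Multiset (PForm V Lit)) (P : Set Lit) (A : PForm V Lit) (l : Lit),
        UnpolLit S P l → (PForm.lit l ∉ Γ ∨ T (posLits P Γ ∪ {S.neg l})) →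
        DerPos S T Γ (insert l P) A n → DerPosD S T Γ P A) ∧
    (∀ (Γ : Multiset (PForm V Lit)) (P : Set Lit) (Δ : Multiset (PForm V Lit)) (l : Lit),
        UnpolLit S P l → PForm.lit (S.neg l) ∈ Γ →
        DerNeg S T Γ (insert l P) Δ n → DerNegD S T Γ (insert (S.neg l) P) Δ) ∧
    (∀ (Γ : Multiset (PForm V Lit)) (P : Set Lit) (A : PForm V Lit) (l : Lit),
        UnpolLit S P l → PForm.lit (S.neg l) ∈ Γ → PForm.lit l ∉ Γ →
        DerPos S T Γ (insert l P) A n → DerPosD S T Γ (insert (S.neg l) P) A) := by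
  intro n
  induction n using Nat.strong_induction_on with
  | _ n IH =>
  have IH1 : ∀ k, k < n → ∀ (Γ : Multiset (PForm V Lit)) (P : Set Lit)
      (Δ : Multiset (PForm V Lit)) (l : Lit),
      UnpolLit S P l → DerNeg S T Γ (insert l P) Δ k → DerNegD S T Γ P Δ :=
    fun k hk => (IH k hk).1
  have IH2 : ∀ k, k < n → ∀ (Γ : Multiset (PForm V Lit)) (P : Set Lit)
      (A : PForm V Lit) (l : Lit),
      UnpolLit S P l → (PForm.lit l ∉ Γ ∨ T (posLits P Γ ∪ {S.neg l})) →
      DerPos S T Γ (insert l P) A k → DerPosD S T Γ P A :=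
    fun k hk => (IH k hk).2.1
  have IH3 : ∀ k, k < n → ∀ (Γ : Multiset (PForm V Lit)) (P : Set Lit)
      (Δ : Multiset (PForm V Lit)) (l : Lit),
      UnpolLit S P l → PForm.lit (S.neg l) ∈ Γ →
      DerNeg S T Γ (insert l P) Δ k → DerNegD S T Γ (insert (S.neg l) P) Δ :=
    fun k hk => (IH k hk).2.2.1
  have IH4 : ∀ k, k < n → ∀ (Γ : Multiset (PForm V Lit)) (P : Set Lit)
      (A : PForm V Lit) (l : Lit),
      UnpolLit S P l → PForm.lit (S.neg l) ∈ Γ → PForm.lit l ∉ Γ →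
      DerPos S T Γ (insert l P) A k → DerPosD S T Γ (insert (S.neg l) P) A :=
    fun k hk => (IH k hk).2.2.2
  refine ⟨?_, ?_, ?_, ?_⟩
  -- ================= Component 1 : unfocused removal =================
  · intro Γ P Δ l hl hd
    cases hd with
    | @andN _ _ A B Δ' k1 k2 h1 h2 =>
        obtain ⟨m1, d1⟩ := IH1 _ (Nat.lt_succ_of_le (le_max_left _ _)) _ _ _ _ hl h1
        obtain ⟨m2, d2⟩ := IH1 _ (Nat.lt_succ_of_le (le_max_right _ _)) _ _ _ _ hl h2
        exact ⟨_, .andN d1 d2⟩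
    | @orN _ _ A B Δ' k h =>
        obtain ⟨m1, d1⟩ := IH1 _ (Nat.lt_succ_self _) _ _ _ _ hl h
        exact ⟨_, .orN d1⟩
    | @fa _ _ x A Δ' k hx h =>
        obtain ⟨m1, d1⟩ := IH1 _ (Nat.lt_succ_self _) _ _ _ _ hl h
        refine ⟨_, .fa (fun hmem => hx ?_) d1⟩
        rcases (Set.mem_union _ _ _).mp hmem with hmem | hmem
        · exact Set.mem_union_left _ hmem
        · exact Set.mem_union_right _ (fvPol_mono (Set.subset_insert _ _) hmem)
    | @botN _ _ Δ' k h =>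
        obtain ⟨m1, d1⟩ := IH1 _ (Nat.lt_succ_self _) _ _ _ _ hl h
        exact ⟨_, .botN d1⟩
    | topN => exact ⟨0, .topN⟩
    | @store _ _ A Δ' k hA h =>
        by_cases hAlit : ∃ m, A = PForm.lit m
        · obtain ⟨m, rfl⟩ := hAlit
          have e : (PForm.negF S (PForm.lit m) : PForm V Lit) = PForm.lit (S.neg m) := rfl
          rw [e] at h
          by_cases hml : m = l
          · subst hml
            rw [polar_lit_of_pol (not_unpol_of_neg_mem
              (by rw [S.neg_invol]; exact Set.mem_insert _ _))] at h
            obtain ⟨k1, d1⟩ := IH3 _ (Nat.lt_succ_self _) _ _ _ _ hl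
              (Multiset.mem_cons_self _ _) h
            refine ⟨k1 + 1, .store (Or.inl ⟨_, rfl⟩) ?_⟩
            rw [e, polar_lit_of_unpol (unpol_neg hl)]
            exact d1
          · by_cases hmnl : m = S.neg l
            · subst hmnl
              rw [S.neg_invol] at h
              rw [polar_lit_of_pol (not_unpol_of_mem (Set.mem_insert _ _))] at h
              refine ⟨k + 1, .store (Or.inl ⟨_, rfl⟩) ?_⟩
              have e2 : (PForm.negF S (PForm.lit (S.neg l)) : PForm V Lit) = PForm.lit l := by
                simp [PForm.negF, S.neg_invol]
              rw [e2, polar_lit_of_unpol hl]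
              exact h
            · by_cases hP1 : S.neg m ∈ P ∨ m ∈ P
              · have hnp : ¬ UnpolLit S (insert l P) (S.neg m) := by
                  rcases hP1 with h1 | h1
                  · exact not_unpol_of_mem (Set.mem_insert_of_mem _ h1)
                  · exact not_unpol_of_neg_mem
                      (by rw [S.neg_invol]; exact Set.mem_insert_of_mem _ h1)
                rw [polar_lit_of_pol hnp] at h
                obtain ⟨k1, d1⟩ := IH1 _ (Nat.lt_succ_self _) _ _ _ _ hl h
                refine ⟨k1 + 1, .store (Or.inl ⟨_, rfl⟩) ?_⟩
                have hnp' : ¬ UnpolLit S P (S.neg m) := by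
                  rcases hP1 with h1 | h1
                  · exact not_unpol_of_mem h1
                  · exact not_unpol_of_neg_mem (by rw [S.neg_invol]; exact h1)
                rw [e, polar_lit_of_pol hnp']
                exact d1
              · push_neg at hP1
                have hnegml : S.neg m ≠ l := fun hh => hmnl (by
                  have := congrArg S.neg hh
                  rwa [S.neg_invol] at this)
                have hu : UnpolLit S (insert l P) (S.neg m) := by
                  constructor
                  · intro hmem
                    rcases Set.mem_insert_iff.mp hmem with hmem | hmem
                    · exact hnegml hmem
                    · exact hP1.1 hmem
                  · rw [S.neg_invol]
                    intro hmem
                    rcases Set.mem_insert_iff.mp hmem with hmem | hmem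
                    · exact hml hmem
                    · exact hP1.2 hmem
                rw [polar_lit_of_unpol hu, Set.insert_comm] at h
                have hl2 : UnpolLit S (insert (S.neg m) P) l := by
                  constructor
                  · intro hmem
                    rcases Set.mem_insert_iff.mp hmem with hmem | hmem
                    · exact hnegml hmem.symm
                    · exact hl.1 hmem
                  · intro hmem
                    rcases Set.mem_insert_iff.mp hmem with hmem | hmem
                    · exact hml (neg_inj S hmem).symm
                    · exact hl.2 hmem
                obtain ⟨k1, d1⟩ := IH1 _ (Nat.lt_succ_self _) _ _ _ _ hl2 h
                refine ⟨k1 + 1, .store (Or.inl ⟨_, rfl⟩) ?_⟩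
                rw [e, polar_lit_of_unpol
                  (⟨hP1.1, by rw [S.neg_invol]; exact hP1.2⟩ : UnpolLit S P (S.neg m))]
                exact d1
        · have hnlA : ∀ m, A ≠ PForm.lit m := fun m hm => hAlit ⟨m, hm⟩
          have hnegnl := negF_nonlit (S := S) hnlA
          rw [polar_of_nonlit hnegnl] at h
          obtain ⟨k1, d1⟩ := IH1 _ (Nat.lt_succ_self _) _ _ _ _ hl h
          refine ⟨k1 + 1, .store ?_ (by rw [polar_of_nonlit hnegnl]; exact d1)⟩
          rcases hA with hA | hA
          · exact Or.inl hA
          · exact Or.inr ((isPos_nonlit_iff hnlA).mp hA)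
    | @select _ _ A k hA hmem h =>
        by_cases hc : (PForm.lit l : PForm V Lit) ∉ Γ ∨ T (posLits P Γ ∪ {S.neg l})
        · obtain ⟨m1, d1⟩ := IH2 _ (Nat.lt_succ_self _) _ _ _ _ hl hc h
          refine ⟨_, .select ?_ hmem d1⟩
          exact fun hneg => hA (isNeg_mono (Set.subset_insert _ _) hneg)
        · push_neg at hc
          have orig : DerNeg S T Γ (insert l P) 0 (k + 1) := .select hA hmem h
          have dd := (dup_all S T (k + 1)).1 _ _ _ _ hc.1 orig
          exact trickRem S T hl hc.1 dd
    | init2 h =>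
        by_cases hlG : (PForm.lit l : PForm V Lit) ∈ Γ
        · have dd : DerNeg S T (PForm.lit l ::ₘ Γ) (insert l P) 0 0 :=
            .init2 (by rwa [posLits_cons_of_mem hlG])
          exact trickRem S T hl hlG dd
        · exact ⟨0, .init2 (by rwa [posLits_insert_of_not_mem hlG] at h)⟩
  -- ================= Component 2 : focused removal =================
  · intro Γ P A l hl hc hd
    cases hd with
    | @andP _ _ A B k1 k2 h1 h2 =>
        obtain ⟨m1, d1⟩ := IH2 _ (Nat.lt_succ_of_le (le_max_left _ _)) _ _ _ _ hl hc h1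
        obtain ⟨m2, d2⟩ := IH2 _ (Nat.lt_succ_of_le (le_max_right _ _)) _ _ _ _ hl hc h2
        exact ⟨_, .andP d1 d2⟩
    | @orP₁ _ _ A B k h =>
        obtain ⟨m1, d1⟩ := IH2 _ (Nat.lt_succ_self _) _ _ _ _ hl hc h
        exact ⟨_, .orP₁ d1⟩
    | @orP₂ _ _ A B k h =>
        obtain ⟨m1, d1⟩ := IH2 _ (Nat.lt_succ_self _) _ _ _ _ hl hc h
        exact ⟨_, .orP₂ d1⟩
    | @exi _ _ x t A k h =>
        obtain ⟨m1, d1⟩ := IH2 _ (Nat.lt_succ_self _) _ _ _ _ hl hc h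
        exact ⟨_, .exi d1⟩
    | topP => exact ⟨0, .topP⟩
    | @init1 _ _ m hm h =>
        rcases Set.mem_insert_iff.mp hm with rfl | hmP
        · have hts : T (posLits P Γ ∪ {S.neg m}) := by
            rcases hc with hc | hc
            · rwa [posLits_insert_of_not_mem hc] at h
            · exact hc
          exact buildPosL S T hT hl hts
        · refine ⟨0, .init1 hmP ?_⟩
          rcases hc with hc | hc
          · rwa [posLits_insert_of_not_mem hc] at h
          · refine hT.cut _ l ?_ ?_
            · refine hT.mono ?_ h
              intro x hx
              rcases (Set.mem_union _ _ _).mp hx with hx | hx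
              · rcases Set.mem_insert_iff.mp (posLits_insert_subset hx) with rfl | hx
                · exact Set.mem_insert _ _
                · exact Set.mem_insert_of_mem _ (Set.mem_union_left _ hx)
              · exact Set.mem_insert_of_mem _ (Set.mem_union_right _ hx)
            · refine hT.mono ?_ hc
              intro x hx
              rcases (Set.mem_union _ _ _).mp hx with hx | hx
              · exact Set.mem_insert_of_mem _ (Set.mem_union_left _ hx)
              · rcases Set.mem_singleton_iff.mp hx with rfl
                exact Set.mem_insert _ _
    | @release _ _ N k hN h =>
        obtain ⟨m1, d1⟩ := IH1 _ (Nat.lt_succ_self _) _ _ _ _ hl h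
        refine ⟨_, .release ?_ d1⟩
        exact fun hp => hN (isPos_mono (Set.subset_insert _ _) hp)
  -- ================= Component 3 : unfocused flip =================
  · intro Γ P Δ l hl hnlG hd
    cases hd with
    | @andN _ _ A B Δ' k1 k2 h1 h2 =>
        obtain ⟨m1, d1⟩ := IH3 _ (Nat.lt_succ_of_le (le_max_left _ _)) _ _ _ _ hl hnlG h1
        obtain ⟨m2, d2⟩ := IH3 _ (Nat.lt_succ_of_le (le_max_right _ _)) _ _ _ _ hl hnlG h2
        exact ⟨_, .andN d1 d2⟩
    | @orN _ _ A B Δ' k h =>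
        obtain ⟨m1, d1⟩ := IH3 _ (Nat.lt_succ_self _) _ _ _ _ hl hnlG h
        exact ⟨_, .orN d1⟩
    | @fa _ _ x A Δ' k hx h =>
        obtain ⟨m1, d1⟩ := IH3 _ (Nat.lt_succ_self _) _ _ _ _ hl hnlG h
        refine ⟨_, .fa (fun hmem => hx ?_) d1⟩
        rcases (Set.mem_union _ _ _).mp hmem with hmem | hmem
        · exact Set.mem_union_left _ hmem
        · rcases (Set.mem_union _ _ _).mp (fvPol_insert_subset hmem) with hmem | hmem
          · exact Set.mem_union_left _ (Set.mem_union_left _ (fvL_subset_fvM hnlG hmem))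
          · exact Set.mem_union_right _ (fvPol_mono (Set.subset_insert _ _) hmem)
    | @botN _ _ Δ' k h =>
        obtain ⟨m1, d1⟩ := IH3 _ (Nat.lt_succ_self _) _ _ _ _ hl hnlG h
        exact ⟨_, .botN d1⟩
    | topN => exact ⟨0, .topN⟩
    | @store _ _ A Δ' k hA h =>
        by_cases hAlit : ∃ m, A = PForm.lit m
        · obtain ⟨m, rfl⟩ := hAlit
          have e : (PForm.negF S (PForm.lit m) : PForm V Lit) = PForm.lit (S.neg m) := rfl
          rw [e] at h
          by_cases hml : m = l
          · subst hml
            rw [polar_lit_of_pol (not_unpol_of_neg_mem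
              (by rw [S.neg_invol]; exact Set.mem_insert _ _))] at h
            obtain ⟨k1, d1⟩ := IH3 _ (Nat.lt_succ_self _) _ _ _ _ hl
              (Multiset.mem_cons_self _ _) h
            refine ⟨k1 + 1, .store (Or.inl ⟨_, rfl⟩) ?_⟩
            rw [e, polar_lit_of_pol (not_unpol_of_mem (Set.mem_insert _ _))]
            exact d1
          · by_cases hmnl : m = S.neg l
            · subst hmnl
              rw [S.neg_invol] at h
              rw [polar_lit_of_pol (not_unpol_of_mem (Set.mem_insert _ _))] at h
              obtain ⟨k1, d1⟩ := IH3 _ (Nat.lt_succ_self _) _ _ _ _ hl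
                (Multiset.mem_cons_of_mem hnlG) h
              refine ⟨k1 + 1, .store (Or.inl ⟨_, rfl⟩) ?_⟩
              have e2 : (PForm.negF S (PForm.lit (S.neg l)) : PForm V Lit) = PForm.lit l := by
                simp [PForm.negF, S.neg_invol]
              rw [e2, polar_lit_of_pol (not_unpol_of_neg_mem (Set.mem_insert _ _))]
              exact d1
            · by_cases hP1 : S.neg m ∈ P ∨ m ∈ P
              · have hnp : ¬ UnpolLit S (insert l P) (S.neg m) := by
                  rcases hP1 with h1 | h1
                  · exact not_unpol_of_mem (Set.mem_insert_of_mem _ h1)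
                  · exact not_unpol_of_neg_mem
                      (by rw [S.neg_invol]; exact Set.mem_insert_of_mem _ h1)
                rw [polar_lit_of_pol hnp] at h
                obtain ⟨k1, d1⟩ := IH3 _ (Nat.lt_succ_self _) _ _ _ _ hl
                  (Multiset.mem_cons_of_mem hnlG) h
                refine ⟨k1 + 1, .store (Or.inl ⟨_, rfl⟩) ?_⟩
                have hnp' : ¬ UnpolLit S (insert (S.neg l) P) (S.neg m) := by
                  rcases hP1 with h1 | h1
                  · exact not_unpol_of_mem (Set.mem_insert_of_mem _ h1)
                  · exact not_unpol_of_neg_mem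
                      (by rw [S.neg_invol]; exact Set.mem_insert_of_mem _ h1)
                rw [e, polar_lit_of_pol hnp']
                exact d1
              · push_neg at hP1
                have hnegml : S.neg m ≠ l := fun hh => hmnl (by
                  have := congrArg S.neg hh
                  rwa [S.neg_invol] at this)
                have hu : UnpolLit S (insert l P) (S.neg m) := by
                  constructor
                  · intro hmem
                    rcases Set.mem_insert_iff.mp hmem with hmem | hmem
                    · exact hnegml hmem
                    · exact hP1.1 hmem
                  · rw [S.neg_invol]
                    intro hmem
                    rcases Set.mem_insert_iff.mp hmem with hmem | hmem
                    · exact hml hmem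
                    · exact hP1.2 hmem
                rw [polar_lit_of_unpol hu, Set.insert_comm] at h
                have hl2 : UnpolLit S (insert (S.neg m) P) l := by
                  constructor
                  · intro hmem
                    rcases Set.mem_insert_iff.mp hmem with hmem | hmem
                    · exact hnegml hmem.symm
                    · exact hl.1 hmem
                  · intro hmem
                    rcases Set.mem_insert_iff.mp hmem with hmem | hmem
                    · exact hml (neg_inj S hmem).symm
                    · exact hl.2 hmem
                obtain ⟨k1, d1⟩ := IH3 _ (Nat.lt_succ_self _) _ _ _ _ hl2
                  (Multiset.mem_cons_of_mem hnlG) h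
                refine ⟨k1 + 1, .store (Or.inl ⟨_, rfl⟩) ?_⟩
                have hu' : UnpolLit S (insert (S.neg l) P) (S.neg m) := by
                  constructor
                  · intro hmem
                    rcases Set.mem_insert_iff.mp hmem with hmem | hmem
                    · exact hml (neg_inj S hmem)
                    · exact hP1.1 hmem
                  · rw [S.neg_invol]
                    intro hmem
                    rcases Set.mem_insert_iff.mp hmem with hmem | hmem
                    · exact hmnl hmem
                    · exact hP1.2 hmem
                rw [e, polar_lit_of_unpol hu', Set.insert_comm]
                exact d1
        · have hnlA : ∀ m, A ≠ PForm.lit m := fun m hm => hAlit ⟨m, hm⟩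
          have hnegnl := negF_nonlit (S := S) hnlA
          rw [polar_of_nonlit hnegnl] at h
          obtain ⟨k1, d1⟩ := IH3 _ (Nat.lt_succ_self _) _ _ _ _ hl
            (Multiset.mem_cons_of_mem hnlG) h
          refine ⟨k1 + 1, .store ?_ (by rw [polar_of_nonlit hnegnl]; exact d1)⟩
          rcases hA with hA | hA
          · exact Or.inl hA
          · exact Or.inr ((isPos_nonlit_iff hnlA).mp hA)
    | @select _ _ A k hA hmem h =>
        by_cases hlG : (PForm.lit l : PForm V Lit) ∈ Γ
        · exact trickFlip S T hT hl hnlG hlG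
        · by_cases hAl : A = PForm.lit l
          · subst hAl
            cases h with
            | init1 hm h2 =>
                refine ⟨0, .init2 (hT.mono ?_ h2)⟩
                intro x hx
                rcases (Set.mem_union _ _ _).mp hx with hx | hx
                · rcases Set.mem_insert_iff.mp hx.1 with rfl | hx1
                  · exact absurd hx.2 hlG
                  · exact ⟨Set.mem_insert_of_mem _ hx1, hx.2⟩
                · rcases Set.mem_singleton_iff.mp hx with rfl
                  exact ⟨Set.mem_insert _ _, hnlG⟩
            | release hN h2 =>
                exact absurd (show PForm.IsPos (insert l P) (PForm.lit l) from
                  Set.mem_insert _ _) hN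
          · obtain ⟨k1, d1⟩ := IH4 _ (Nat.lt_succ_self _) _ _ _ _ hl hnlG hlG h
            refine ⟨_, .select ?_ hmem d1⟩
            intro hneg
            apply hA
            by_cases hAlit : ∃ m', A = PForm.lit m'
            · obtain ⟨m', rfl⟩ := hAlit
              simp only [PForm.IsNeg] at hneg ⊢
              rcases Set.mem_insert_iff.mp hneg with he | hneg
              · exact absurd (congrArg PForm.lit (neg_inj S he)) hAl
              · exact Set.mem_insert_of_mem _ hneg
            · exact (isNeg_nonlit_iff (fun m' hm' => hAlit ⟨m', hm'⟩)).mp hneg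
    | init2 h =>
        by_cases hlG : (PForm.lit l : PForm V Lit) ∈ Γ
        · exact trickFlip S T hT hl hnlG hlG
        · refine ⟨0, .init2 (hT.mono ?_ h)⟩
          intro x hx
          rcases Set.mem_insert_iff.mp hx.1 with rfl | hx1
          · exact absurd hx.2 hlG
          · exact ⟨Set.mem_insert_of_mem _ hx1, hx.2⟩
  -- ================= Component 4 : focused flip =================
  · intro Γ P A l hl hnlG hlG hd
    cases hd with
    | @andP _ _ A B k1 k2 h1 h2 =>
        obtain ⟨m1, d1⟩ := IH4 _ (Nat.lt_succ_of_le (le_max_left _ _)) _ _ _ _ hl hnlG hlG h1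
        obtain ⟨m2, d2⟩ := IH4 _ (Nat.lt_succ_of_le (le_max_right _ _)) _ _ _ _ hl hnlG hlG h2
        exact ⟨_, .andP d1 d2⟩
    | @orP₁ _ _ A B k h =>
        obtain ⟨m1, d1⟩ := IH4 _ (Nat.lt_succ_self _) _ _ _ _ hl hnlG hlG h
        exact ⟨_, .orP₁ d1⟩
    | @orP₂ _ _ A B k h =>
        obtain ⟨m1, d1⟩ := IH4 _ (Nat.lt_succ_self _) _ _ _ _ hl hnlG hlG h
        exact ⟨_, .orP₂ d1⟩
    | @exi _ _ x t A k h =>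
        obtain ⟨m1, d1⟩ := IH4 _ (Nat.lt_succ_self _) _ _ _ _ hl hnlG hlG h
        exact ⟨_, .exi d1⟩
    | topP => exact ⟨0, .topP⟩
    | @init1 _ _ m hm h =>
        rcases Set.mem_insert_iff.mp hm with rfl | hmP
        · refine buildPosL' S T hT hl (hT.mono ?_ h)
          intro x hx
          rcases (Set.mem_union _ _ _).mp hx with hx | hx
          · rcases Set.mem_insert_iff.mp hx.1 with rfl | hx1
            · exact absurd hx.2 hlG
            · exact ⟨Set.mem_insert_of_mem _ hx1, Multiset.mem_cons_of_mem hx.2⟩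
          · rcases Set.mem_singleton_iff.mp hx with rfl
            exact ⟨Set.mem_insert _ _, Multiset.mem_cons_self _ _⟩
        · refine ⟨0, .init1 (Set.mem_insert_of_mem _ hmP) (hT.mono ?_ h)⟩
          intro x hx
          rcases (Set.mem_union _ _ _).mp hx with hx | hx
          · rcases Set.mem_insert_iff.mp hx.1 with rfl | hx1
            · exact absurd hx.2 hlG
            · exact Set.mem_union_left _ ⟨Set.mem_insert_of_mem _ hx1, hx.2⟩
          · exact Set.mem_union_right _ hx
    | @release _ _ _ k hN h =>
        by_cases hNP : PForm.IsPos (insert (S.neg l) P) A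
        · have hNe : A = PForm.lit (S.neg l) := by
            by_cases hNlit : ∃ m', A = PForm.lit m'
            · obtain ⟨m', rfl⟩ := hNlit
              simp only [PForm.IsPos] at hNP hN
              rcases Set.mem_insert_iff.mp hNP with rfl | hm'
              · rfl
              · exact absurd (Set.mem_insert_of_mem _ hm') hN
            · exact absurd ((isPos_nonlit_iff (fun m' hm' => hNlit ⟨m', hm'⟩)).mp hNP) hN
          subst hNe
          exact ⟨0, posNl S T hT hnlG⟩
        · obtain ⟨k1, d1⟩ := IH3 _ (Nat.lt_succ_self _) _ _ _ _ hl hnlG h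
          exact ⟨_, .release hNP d1⟩

end PolProofAux

open PolProofAux

/-- The polarisation-removal rules (Pol) and (Pol_a) are admissible in LK(T)p. -/
theorem pol_removal_admissible {V Tm Lit : Type} (S : LitStr V Tm Lit)
    (T : Set Lit → Prop) (hT : InconsPred S T) :
    (∀ (Γ : Multiset (PForm V Lit)) (P : Set Lit) (Δ : Multiset (PForm V Lit)) (l : Lit),
        UnpolLit S P l →
        DerNegD S T Γ (insert l P) Δ → DerNegD S T Γ P Δ) ∧
    (∀ (Γ : Multiset (PForm V Lit)) (P : Set Lit) (A : PForm V Lit) (l : Lit),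
        UnpolLit S P l →
        (PForm.lit l ∉ Γ ∨ T (posLits P Γ ∪ {S.neg l})) →
        DerPosD S T Γ (insert l P) A → DerPosD S T Γ P A) := by
  constructor
  · rintro Γ P Δ l hl ⟨n, hd⟩
    exact (PolProofAux.pol_main S T hT n).1 Γ P Δ l hl hd
  · rintro Γ P A l hl hc ⟨n, hd⟩
    exact (PolProofAux.pol_main S T hT n).2.1 Γ P A l hl hc hd
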